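/- arXiv:2112.00520 — 2 statements merged into one kernel-verified Lean document; each statement's English description precedes it below -/
import Mathlib

section
/- For m = 21: the set H²¹₍₁,₃₎ = {h ∈ (Z/21Z)^× : ⟨h⟩ + ⟨3h⟩ < 21} and H²¹₍₁,₁₎ = {h ∈ (Z/21Z)^× : 2⟨h⟩ < 21} satisfy: there exists a unit t ∈ (Z/21Z)^× with t · H²¹₍₁,₁₎ = H²¹₍₁,₃₎. -/
/- Both sets are {1, 2, 4, 5, 8, 10}, so already t = 1 works. -/
theorem zmod21_cm_type_one_three_eq_one_one (h : ZMod 21) :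
    IsUnit h ∧ h.val + (3 * h).val < 21 ↔ IsUnit h ∧ h.val + h.val < 21 := by
  revert h
  decide

theorem stmt_15 :
    ∃ t : ZMod 21, IsUnit t ∧
      (fun x => t * x) '' {h : ZMod 21 | IsUnit h ∧ h.val + h.val < 21} =
        {h : ZMod 21 | IsUnit h ∧ h.val + (3 * h).val < 21} := by
  refine ⟨1, isUnit_one, ?_⟩
  simp only [one_mul, Set.image_id']
  ext h
  exact (zmod21_cm_type_one_three_eq_one_one h).symm
end

section
/- For every integer k ≥ 1, setting m = 4k + 2: there exists a unit t ∈ (Z/mZ)^× such that t · {h ∈ (Z/mZ)^× : 2⟨h⟩ < m} = {h ∈ (Z/mZ)^× : ⟨h⟩ + ⟨kh⟩ < m}. -/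
/-!
Take `t = 1`. Write `n = 2k + 1`, `m = 2n`, and let `v = ⟨h⟩` for a unit `h`, so that `v` is odd and
`v ≠ n`. If `r = ⟨kh⟩`, then `2r + v ≡ (2k + 1) v = n v ≡ n (mod m)` because `v` is odd, so
`2r + v ∈ {n, 3n, 5n}`. Since `2(v + r) = (2r + v) + v`, in each case `v + r < m ↔ v < n`.
-/

theorem ZMod.coprime_val_of_isUnit {m : ℕ} {h : ZMod m} (hu : IsUnit h) : h.val.Coprime m := by
  simpa using ZMod.val_coe_unit_coprime hu.unit

theorem ZMod.val_ne_of_isUnit {m d : ℕ} (hdm : d ∣ m) (hd : d ≠ 1) {h : ZMod m} (hu : IsUnit h) :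
    h.val ≠ d := by
  rintro rfl
  exact hd (Nat.Coprime.eq_one_of_dvd (ZMod.coprime_val_of_isUnit hu) hdm)

theorem ZMod.odd_val_of_isUnit {m : ℕ} (hm : Even m) {h : ZMod m} (hu : IsUnit h) :
    Odd h.val :=
  Nat.Coprime.odd_of_right ((ZMod.coprime_val_of_isUnit hu).coprime_dvd_right hm.two_dvd)

theorem two_mul_mul_mod_add_modEq_of_odd {k v : ℕ} (hv : Odd v) :
    2 * (k * v % (4 * k + 2)) + v ≡ 2 * k + 1 [MOD 4 * k + 2] := by
  obtain ⟨j, rfl⟩ := hv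
  calc 2 * (k * (2 * j + 1) % (4 * k + 2)) + (2 * j + 1)
      ≡ 2 * (k * (2 * j + 1)) + (2 * j + 1) [MOD 4 * k + 2] :=
        ((Nat.mod_modEq _ _).mul_left 2).add_right _
    _ = 2 * k + 1 + (4 * k + 2) * j := by ring
    _ ≡ 2 * k + 1 [MOD 4 * k + 2] := by simp [Nat.ModEq]

theorem add_mul_mod_lt_iff_of_odd {k v : ℕ} (hv : v < 4 * k + 2) (hodd : Odd v)
    (hne : v ≠ 2 * k + 1) : v + k * v % (4 * k + 2) < 4 * k + 2 ↔ v + v < 4 * k + 2 := by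
  set r := k * v % (4 * k + 2)
  have hr : r < 4 * k + 2 := Nat.mod_lt _ (by omega)
  have hmod : (2 * r + v) % (4 * k + 2) = 2 * k + 1 := by
    rw [two_mul_mul_mod_add_modEq_of_odd hodd, Nat.mod_eq_of_lt (by omega)]
  have hdiv := Nat.div_add_mod (2 * r + v) (4 * k + 2)
  have hdiv_lt : (2 * r + v) / (4 * k + 2) < 3 := (Nat.div_lt_iff_lt_mul (by omega)).mpr (by omega)
  rw [hmod] at hdiv
  interval_cases (2 * r + v) / (4 * k + 2) <;> omega

theorem stmt_16 (k : ℕ) (hk : 1 ≤ k) :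
    ∃ t : ZMod (4 * k + 2), IsUnit t ∧
      (fun x => t * x) ''
          {h : ZMod (4 * k + 2) | IsUnit h ∧ h.val + h.val < 4 * k + 2} =
        {h : ZMod (4 * k + 2) | IsUnit h ∧
          h.val + ((k : ZMod (4 * k + 2)) * h).val < 4 * k + 2} := by
  refine ⟨1, isUnit_one, ?_⟩
  simp only [one_mul, Set.image_id']
  refine Set.ext fun h => and_congr_right fun hu => ?_
  rw [ZMod.val_mul, ZMod.val_natCast_of_lt (by omega)]
  exact (add_mul_mod_lt_iff_of_odd (ZMod.val_lt h) (ZMod.odd_val_of_isUnit ⟨2 * k + 1, by ring⟩ hu)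
    (ZMod.val_ne_of_isUnit ⟨2, by ring⟩ (by omega) hu)).symm
end
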